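/- Firing probability after at least m failures: Let μ ∈ (0,1), w > 0, γ = w/(1−μ), and let v : {1,…,N} → ℝ satisfy v(1) = 0 and (1 − μ^{i−1})·γ ≤ v(i) ≤ γ for all i. Let k ∈ ℕ be such that μ^k γ ≤ 1. Then μ^k γ (1 − (1/N)(1−μ^N)/(1−μ)) ≤ (1/N) Σ_{i=1}^{N} φ(μ^k v(i)) ≤ μ^k γ (1 − 1/N). In particular the one-step firing probability after k consecutive leakage steps from the metastable basin decays proportionally to μ^k. -/

import Mathlib

/-- The firing probability function: `φ(u) = min(u,1)` for `u ≥ 0` and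
`φ(u) = 0` for `u ≤ 0`. -/
noncomputable def phi (u : ℝ) : ℝ := min (max u 0) 1

/-!
Below threshold no potential is clipped: every `μ^k v(i)` lies in `[0, 1]`, so the firing
probability is exactly `μ^k` times the mean potential `(1/N) Σ v(i)`. The mean is bounded above
by `(1 - 1/N) γ` because `v(1) = 0` and every other `v(i) ≤ γ`, and below by summing the lower
bounds `(1 - μ^{i-1}) γ`, a geometric series.
-/

open Finset

theorem phi_of_mem_Icc {u : ℝ} (hu : u ∈ Set.Icc 0 1) : phi u = u := by
  rw [phi, max_eq_left hu.1, min_eq_left hu.2]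

theorem sum_phi_of_mem_Icc {ι : Type*} [Fintype ι] {u : ι → ℝ}
    (hu : ∀ i, u i ∈ Set.Icc 0 1) : ∑ i, phi (u i) = ∑ i, u i :=
  sum_congr rfl fun i _ => phi_of_mem_Icc (hu i)

theorem sum_fin_pow_eq {K : Type*} [DivisionRing K] {x : K} (hx : x ≠ 1) (n : ℕ) :
    ∑ i : Fin n, x ^ (i : ℕ) = (1 - x ^ n) / (1 - x) := by
  rw [Fin.sum_univ_eq_sum_range (x ^ ·), range_eq_Ico, geom_sum_Ico' hx n.zero_le, pow_zero]

theorem sum_le_card_sub_one_mul {ι : Type*} [Fintype ι] {v : ι → ℝ} {γ : ℝ}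
    (i₀ : ι) (hv₀ : v i₀ = 0) (hv : ∀ i, v i ≤ γ) :
    ∑ i, v i ≤ (Fintype.card ι - 1) * γ := by
  classical
  have hrest : ∑ i ∈ univ.erase i₀, v i ≤ #(univ.erase i₀) • γ :=
    sum_le_card_nsmul _ _ _ fun i _ => hv i
  rw [← add_sum_erase _ v (mem_univ i₀), hv₀, zero_add]
  rwa [card_erase_of_mem (mem_univ i₀), card_univ, nsmul_eq_mul,
    Nat.cast_pred (Fintype.card_pos_iff.mpr ⟨i₀⟩)] at hrest

theorem le_sum_of_one_sub_pow_mul_le {N : ℕ} {μ γ : ℝ} (hμ : μ ≠ 1) {v : Fin N → ℝ}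
    (hv : ∀ i : Fin N, (1 - μ ^ (i : ℕ)) * γ ≤ v i) :
    (N - (1 - μ ^ N) / (1 - μ)) * γ ≤ ∑ i, v i :=
  calc (N - (1 - μ ^ N) / (1 - μ)) * γ = ∑ i : Fin N, (1 - μ ^ (i : ℕ)) * γ := by
        rw [← sum_mul, sum_sub_distrib, sum_fin_pow_eq hμ, sum_const, card_univ,
          Fintype.card_fin, nsmul_one]
    _ ≤ ∑ i, v i := sum_le_sum fun i _ => hv i

/-- Firing probability after at least `m` failures.  Let
`γ = w/(1−μ)`, let `v : Fin N → ℝ` (0-based) satisfy `v 0 = 0` and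
`(1 − μ^i) γ ≤ v i ≤ γ` for all `i`, and let `k ∈ ℕ` with `μ^k γ ≤ 1`.  Then
`μ^k γ (1 − (1/N)(1−μ^N)/(1−μ)) ≤ (1/N) Σ_i φ(μ^k v i) ≤ μ^k γ (1 − 1/N)`. -/
theorem firing_prob_after_m_failures (N : ℕ) (hN : 2 ≤ N) (μ w : ℝ)
    (hμ0 : 0 < μ) (hμ1 : μ < 1) (hw : 0 < w)
    (v : Fin N → ℝ)
    (hv0 : v ⟨0, by omega⟩ = 0)
    (hv : ∀ i : Fin N,
      (1 - μ ^ (i : ℕ)) * (w / (1 - μ)) ≤ v i ∧ v i ≤ w / (1 - μ))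
    (k : ℕ) (hk : μ ^ k * (w / (1 - μ)) ≤ 1) :
    μ ^ k * (w / (1 - μ)) * (1 - (1 / (N : ℝ)) * (1 - μ ^ N) / (1 - μ))
        ≤ (1 / (N : ℝ)) * ∑ i, phi (μ ^ k * v i) ∧
    (1 / (N : ℝ)) * ∑ i, phi (μ ^ k * v i)
        ≤ μ ^ k * (w / (1 - μ)) * (1 - 1 / (N : ℝ)) := by
  set γ := w / (1 - μ)
  have hγ : 0 ≤ γ := div_nonneg hw.le (sub_nonneg.mpr hμ1.le)
  have hμk : 0 ≤ μ ^ k := pow_nonneg hμ0.le k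
  have hN0 : (0 : ℝ) < N := by positivity
  have hv_nonneg (i : Fin N) : 0 ≤ v i :=
    (mul_nonneg (sub_nonneg.mpr (pow_le_one₀ hμ0.le hμ1.le)) hγ).trans (hv i).1
  have hclip (i : Fin N) : μ ^ k * v i ∈ Set.Icc 0 1 :=
    ⟨mul_nonneg hμk (hv_nonneg i), (mul_le_mul_of_nonneg_left (hv i).2 hμk).trans hk⟩
  have hlow := le_sum_of_one_sub_pow_mul_le hμ1.ne fun i => (hv i).1
  have hup := sum_le_card_sub_one_mul _ hv0 fun i => (hv i).2
  rw [Fintype.card_fin] at hup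
  rw [sum_phi_of_mem_Icc hclip, ← mul_sum]
  constructor
  · calc μ ^ k * γ * (1 - 1 / (N : ℝ) * (1 - μ ^ N) / (1 - μ))
          = μ ^ k / N * ((N - (1 - μ ^ N) / (1 - μ)) * γ) := by field_simp
      _ ≤ μ ^ k / N * ∑ i, v i := by gcongr
      _ = 1 / N * (μ ^ k * ∑ i, v i) := by ring
  · calc 1 / (N : ℝ) * (μ ^ k * ∑ i, v i) = μ ^ k / N * ∑ i, v i := by ring
      _ ≤ μ ^ k / N * ((N - 1) * γ) := by gcongr
      _ = μ ^ k * γ * (1 - 1 / N) := by field_simp
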